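/- Suppose g(x) = ∫_0^∞ (2π)^{-d/2} ξ^{-d/2} exp(-||x||²/(2ξ)) K ξ^{-r} L(ξ) dξ for x ∈ ℝ^d, where K > 0, r > 1, and 0 ≤ L(ξ) ≤ C for all ξ > 0 with C ≥ 1. Then for all x ≠ 0, g(x) ≤ C K 2^{r-1} π^{-d/2} Γ(d/2 + r - 1) ||x||^{-(d + 2r - 2)}. -/

import Mathlib

open MeasureTheory Real

/-!
Bounding `L` by `C` leaves the inverse-gamma integral
`∫₀^∞ ξ ^ (-(s + 1)) e ^ (-a / ξ) dξ = a ^ (-s) Γ(s)` with `s = d / 2 + r - 1` and `a = ‖x‖² / 2`;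
the substitution `ξ = 1 / y` turns it into Euler's integral for `Γ(s)`, and `r > 1` makes `s > 0`.
-/

open Set

namespace Real

/-- The left side is the integrand of `integral_comp_rpow_Ioi` for `p = -1` and the Gamma kernel
`y ^ (s - 1) * exp (-(a * y))`. -/
lemma abs_neg_one_mul_rpow_smul_rpow_mul_exp_inv {a s ξ : ℝ} (hξ : 0 < ξ) :
    (|(-1 : ℝ)| * ξ ^ ((-1 : ℝ) - 1)) • ((ξ ^ (-1 : ℝ)) ^ (s - 1) * exp (-(a * ξ ^ (-1 : ℝ))))
      = ξ ^ (-(s + 1)) * exp (-(a / ξ)) := by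
  rw [smul_eq_mul, rpow_neg_one, inv_rpow hξ.le, ← rpow_neg hξ.le, abs_neg, abs_one, one_mul,
    ← mul_assoc, ← rpow_add hξ, div_eq_mul_inv]
  ring_nf

lemma integrableOn_rpow_neg_mul_exp_neg_div_Ioi {a s : ℝ} (ha : 0 < a) (hs : 0 < s) :
    IntegrableOn (fun ξ : ℝ ↦ ξ ^ (-(s + 1)) * exp (-(a / ξ))) (Ioi 0) := by
  have hgamma : IntegrableOn (fun y : ℝ ↦ y ^ (s - 1) * exp (-(a * y))) (Ioi 0) := by
    simpa [neg_mul] using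
      integrableOn_rpow_mul_exp_neg_mul_rpow (p := 1) (by linarith) one_pos ha
  exact ((integrableOn_Ioi_comp_rpow_iff _ (by norm_num : (-1 : ℝ) ≠ 0)).mpr hgamma).congr_fun
    (fun ξ hξ ↦ abs_neg_one_mul_rpow_smul_rpow_mul_exp_inv hξ) measurableSet_Ioi

lemma integral_rpow_neg_mul_exp_neg_div_Ioi {a s : ℝ} (ha : 0 < a) (hs : 0 < s) :
    ∫ ξ in Ioi (0 : ℝ), ξ ^ (-(s + 1)) * exp (-(a / ξ)) = a ^ (-s) * Gamma s := by
  rw [← setIntegral_congr_fun measurableSet_Ioi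
      (fun ξ hξ ↦ abs_neg_one_mul_rpow_smul_rpow_mul_exp_inv (a := a) (s := s) hξ),
    integral_comp_rpow_Ioi (fun y ↦ y ^ (s - 1) * exp (-(a * y))) (by norm_num),
    integral_rpow_mul_exp_neg_mul_Ioi hs ha, one_div, inv_rpow ha.le, rpow_neg ha.le]

end Real

lemma two_mul_pi_rpow_mul_sq_div_two_rpow {t : ℝ} (ht : 0 < t) (d r : ℝ) :
    (2 * π) ^ (-d / 2) * (t ^ 2 / 2) ^ (-(d / 2 + r - 1))
      = 2 ^ (r - 1) * π ^ (-d / 2) * t ^ (-(d + 2 * r - 2)) := by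
  calc _ = 2 ^ (-d / 2) * π ^ (-d / 2) *
        (t ^ ((2 : ℝ) * -(d / 2 + r - 1)) * 2 ^ (d / 2 + r - 1)) := by
        rw [mul_rpow zero_le_two pi_pos.le, div_rpow (by positivity) zero_le_two, ← rpow_two,
          ← rpow_mul ht.le, rpow_neg zero_le_two (d / 2 + r - 1), div_inv_eq_mul]
    _ = 2 ^ (-d / 2 + (d / 2 + r - 1)) * π ^ (-d / 2) * t ^ ((2 : ℝ) * -(d / 2 + r - 1)) := by
        rw [rpow_add two_pos]
        ring
    _ = _ := by ring_nf

lemma gaussian_scale_mixture_integrand_le {d K r C l t ξ : ℝ} (hK : 0 ≤ K) (hξ : 0 < ξ)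
    (hl : l ≤ C) :
    (2 * π) ^ (-d / 2) * ξ ^ (-d / 2) * exp (-t ^ 2 / (2 * ξ)) * (K * ξ ^ (-r) * l) ≤
      (2 * π) ^ (-d / 2) * K * C * (ξ ^ (-(d / 2 + r - 1 + 1)) * exp (-(t ^ 2 / 2 / ξ))) := by
  calc _ = (2 * π) ^ (-d / 2) * K * (ξ ^ (-d / 2) * ξ ^ (-r) * exp (-t ^ 2 / (2 * ξ))) * l := by
        ring
    _ ≤ (2 * π) ^ (-d / 2) * K * (ξ ^ (-d / 2) * ξ ^ (-r) * exp (-t ^ 2 / (2 * ξ))) * C := by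
        gcongr
    _ = _ := by
        rw [← rpow_add hξ]
        ring_nf

theorem gaussian_scale_mixture_upper_general (d : ℕ) (K r C : ℝ) (L : ℝ → ℝ)
    (hK : 0 < K) (hr : 1 < r)
    (hL : ∀ ξ : ℝ, 0 < ξ → 0 ≤ L ξ ∧ L ξ ≤ C)
    (x : EuclideanSpace ℝ (Fin d)) (hx : x ≠ 0) :
    (∫ ξ in Set.Ioi (0:ℝ),
        (2 * Real.pi) ^ (-(d : ℝ) / 2) * ξ ^ (-(d : ℝ) / 2) *
          Real.exp (-‖x‖ ^ 2 / (2 * ξ)) * (K * ξ ^ (-r) * L ξ)) ≤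
      C * K * 2 ^ (r - 1) * Real.pi ^ (-(d : ℝ) / 2) *
        Real.Gamma ((d : ℝ) / 2 + r - 1) * ‖x‖ ^ (-((d : ℝ) + 2 * r - 2)) := by
  have hs : 0 < (d : ℝ) / 2 + r - 1 := by
    have : (0 : ℝ) ≤ d / 2 := by positivity
    linarith
  have ha : 0 < ‖x‖ ^ 2 / 2 := by positivity
  calc _ ≤ ∫ ξ in Ioi (0 : ℝ), (2 * π) ^ (-(d : ℝ) / 2) * K * C *
        (ξ ^ (-((d : ℝ) / 2 + r - 1 + 1)) * exp (-(‖x‖ ^ 2 / 2 / ξ))) := by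
        refine setIntegral_mono_of_nonneg (fun ξ (hξ : 0 < ξ) ↦ ?_)
          (fun ξ hξ ↦ gaussian_scale_mixture_integrand_le hK.le hξ (hL ξ hξ).2)
          ((integrableOn_rpow_neg_mul_exp_neg_div_Ioi ha hs).const_mul _)
        have := (hL ξ hξ).1
        positivity
    _ = C * K * ((2 * π) ^ (-(d : ℝ) / 2) * (‖x‖ ^ 2 / 2) ^ (-((d : ℝ) / 2 + r - 1))) *
        Gamma ((d : ℝ) / 2 + r - 1) := by
        rw [integral_const_mul, integral_rpow_neg_mul_exp_neg_div_Ioi ha hs]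
        ring
    _ = _ := by
        rw [two_mul_pi_rpow_mul_sq_div_two_rpow (norm_pos_iff.mpr hx)]
        ring

/-- Upper bound for a Gaussian scale mixture with polynomial-tailed mixing density:
if `g(x) = ∫_0^∞ (2π)^{-d/2} ξ^{-d/2} exp(-‖x‖²/(2ξ)) K ξ^{-r} L(ξ) dξ` with `K > 0`,
`r > 1` and `0 ≤ L(ξ) ≤ C` for all `ξ > 0` (`C ≥ 1`), then for all `x ≠ 0`,
`g(x) ≤ C K 2^{r-1} π^{-d/2} Γ(d/2+r-1) ‖x‖^{-(d+2r-2)}`. -/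
theorem gaussian_scale_mixture_upper (d : ℕ) (K r C : ℝ) (L : ℝ → ℝ)
    (hK : 0 < K) (hr : 1 < r) (hC : 1 ≤ C)
    (hL : ∀ ξ : ℝ, 0 < ξ → 0 ≤ L ξ ∧ L ξ ≤ C)
    (x : EuclideanSpace ℝ (Fin d)) (hx : x ≠ 0) :
    (∫ ξ in Set.Ioi (0:ℝ),
        (2 * Real.pi) ^ (-(d : ℝ) / 2) * ξ ^ (-(d : ℝ) / 2) *
          Real.exp (-‖x‖ ^ 2 / (2 * ξ)) * (K * ξ ^ (-r) * L ξ)) ≤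
      C * K * 2 ^ (r - 1) * Real.pi ^ (-(d : ℝ) / 2) *
        Real.Gamma ((d : ℝ) / 2 + r - 1) * ‖x‖ ^ (-((d : ℝ) + 2 * r - 2)) :=
  gaussian_scale_mixture_upper_general d K r C L hK hr hL x hx
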